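/- Let n ≥ 4 and let p, q be integers with 2 ≤ p < q and 2q ≤ n. Let k_{2p}, k_{2q} be integers with 1 ≤ k_{2p} < p and 1 ≤ k_{2q} < q, and suppose k_{2p} ≤ q - k_{2q} ≤ p. Then in S_n the following exchange law holds: v_{2q}^{k_{2q}} · v_{2p}^{k_{2p}} = v_{2k_{2q}}^{p+k_{2q}-q} · v_{2k_{2q}+2k_{2p}}^{q-p} · v_{2q}^{k_{2q}+k_{2p}}. -/

import Mathlib

/- We work in the symmetric group on `Fin n` (representing `{1, ..., n}` via `i ↦ i - 1`).
The paper multiplies permutations left-to-right: `(π₁ · π₂)(i) = π₂(π₁(i))`,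
while Mathlib's `*` on `Equiv.Perm` is function composition: `(π₁ * π₂)(i) = π₁(π₂(i))`.
Hence a paper product `A · B · C` is rendered below as `C * B * A`. -/

/-- `sP n i` is the transposition `sᵢ = (i, i+1)` (1-indexed), for `1 ≤ i ≤ n - 1`. -/
def sP (n i : ℕ) : Equiv.Perm (Fin n) :=
  if h : 1 ≤ i ∧ i < n then
    Equiv.swap ⟨i - 1, lt_of_le_of_lt (Nat.sub_le i 1) h.2⟩ ⟨i, h.2⟩
  else 1

/-- `tP n m` is `t_m = s₁ · s₂ ⋯ s_{m-1}` (paper's left-to-right product, so here the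
factor for larger index is multiplied on the left).  `tP n 0 = tP n 1 = 1`. -/
def tP (n m : ℕ) : Equiv.Perm (Fin n) :=
  (List.range (m - 1)).foldl (fun g j => sP n (j + 1) * g) 1

/-- `uP n r` is `u_{2r} = t_{2r-2} · s_{2r-1}` (paper order; here reversed). -/
def uP (n r : ℕ) : Equiv.Perm (Fin n) := sP n (2 * r - 1) * tP n (2 * r - 2)

/-- `vP n r` is `v_{2r} = t_{2r}²`. -/
def vP (n r : ℕ) : Equiv.Perm (Fin n) := (tP n (2 * r)) ^ 2

/-- Pointwise evaluation of the transposition `sP n i`. -/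
lemma sP_apply (n i : ℕ) (h1 : 1 ≤ i) (h2 : i < n) (x : Fin n) :
    ((sP n i x : Fin n) : ℕ) = if (x:ℕ) = i - 1 then i else if (x:ℕ) = i then i - 1 else (x:ℕ) := by
  rw [sP, dif_pos ⟨h1, h2⟩, Equiv.swap_apply_def]
  simp only [Fin.ext_iff]
  split_ifs <;> simp_all

/-- Recursion for `tP`. -/
lemma tP_succ (n m : ℕ) (hm : 1 ≤ m) : tP n (m+1) = sP n m * tP n m := by
  unfold tP
  have h : m + 1 - 1 = (m-1) + 1 := by omega
  rw [h, List.range_succ, List.foldl_append]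
  simp only [List.foldl_cons, List.foldl_nil]
  congr 2
  omega

/-- Pointwise evaluation of `tP n m`: a backwards rotation of `{0, …, m-1}`. -/
lemma tP_apply (n m : ℕ) (hm : m ≤ n) (x : Fin n) :
    ((tP n m x : Fin n) : ℕ) =
      if (x:ℕ) < m then (if 1 ≤ (x:ℕ) then (x:ℕ) - 1 else (x:ℕ) + m - 1) else (x:ℕ) := by
  induction m with
  | zero => simp [tP]
  | succ m ih =>
    rcases Nat.eq_zero_or_pos m with h0 | h0
    · subst h0
      have hx := x.isLt
      simp [tP]
      intros; omega
    · rw [tP_succ n m h0, Equiv.Perm.mul_apply,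
        sP_apply n m h0 (by omega) (tP n m x), ih (by omega)]
      have hx := x.isLt
      split_ifs <;> omega

/-- Pointwise evaluation of powers of `tP n M` for exponents at most `M`. -/
lemma tP_pow_apply (n M j : ℕ) (hM : M ≤ n) (hj : j ≤ M) (x : Fin n) :
    (((tP n M ^ j) x : Fin n) : ℕ) =
      if (x:ℕ) < M then (if j ≤ (x:ℕ) then (x:ℕ) - j else (x:ℕ) + M - j) else (x:ℕ) := by
  induction j generalizing x with
  | zero =>
    simp only [pow_zero, Equiv.Perm.one_apply]
    split_ifs <;> omega
  | succ j ih =>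
    rw [pow_succ, Equiv.Perm.mul_apply, ih (by omega) (tP n M x), tP_apply n M hM x]
    have hx := x.isLt
    split_ifs <;> omega

/-- Pointwise evaluation of powers of `vP n m` for exponents at most `m`. -/
lemma vP_pow_apply (n m k : ℕ) (hm : 2*m ≤ n) (hk : k ≤ m) (x : Fin n) :
    (((vP n m ^ k) x : Fin n) : ℕ) =
      if (x:ℕ) < 2*m then (if 2*k ≤ (x:ℕ) then (x:ℕ) - 2*k else (x:ℕ) + 2*m - 2*k) else (x:ℕ) := by
  have h : vP n m ^ k = tP n (2*m) ^ (2*k) := by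
    rw [vP, ← pow_mul, mul_comm]
  rw [h, tP_pow_apply n (2*m) (2*k) hm (by omega) x]

set_option maxHeartbeats 2000000 in
/-- exchange law for the `v`'s, case `k_{2p} ≤ q - k_{2q} ≤ p`:
`v_{2q}^{k_{2q}} · v_{2p}^{k_{2p}} = v_{2k_{2q}}^{p+k_{2q}-q} · v_{2k_{2q}+2k_{2p}}^{q-p} · v_{2q}^{k_{2q}+k_{2p}}`
(paper order; rendered here in composition order, i.e. reversed).  Here `vP n m = v_{2m}`. -/
theorem v_exchange_case2 (n p q kp kq : ℕ) (hn : 4 ≤ n)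
    (hp : 2 ≤ p) (hpq : p < q) (hq : 2 * q ≤ n)
    (hkp1 : 1 ≤ kp) (hkp2 : kp < p) (hkq1 : 1 ≤ kq) (hkq2 : kq < q)
    (h1 : kp ≤ q - kq) (h2 : q - kq ≤ p) :
    vP n p ^ kp * vP n q ^ kq =
      vP n q ^ (kq + kp) * vP n (kq + kp) ^ (q - p) * vP n kq ^ (p + kq - q) := by
  apply Equiv.ext
  intro x
  apply Fin.val_injective
  simp only [Equiv.Perm.mul_apply]
  rw [vP_pow_apply n p kp (by omega) (by omega),
      vP_pow_apply n q kq (by omega) (by omega),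
      vP_pow_apply n q (kq+kp) (by omega) (by omega),
      vP_pow_apply n (kq+kp) (q-p) (by omega) (by omega),
      vP_pow_apply n kq (p+kq-q) (by omega) (by omega)]
  have hx := x.isLt
  split_ifs <;> omega
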